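/- arXiv:2605.14917 — 4 statements merged into one kernel-verified Lean document; each statement's English description precedes it below -/
import Mathlib

section
/- Let p and q be probability measures on a measurable space (𝒴, ℬ(𝒴)) with p ≪ q, and suppose there exists a constant C ≥ 1 such that dp/dq ≤ C holds q-almost everywhere. Then KL(p‖q) ≤ 2·M_C·TV(p, q), where M_C := max(1, (C·log C − C + 1)/(C − 1)) for C > 1 and M_1 := 1. -/
open MeasureTheory

/-! Write `f = dp/dq` and `φ(x) = x log x - x + 1` (Mathlib's `klFun`). Since `∫ (f - 1) dq = 0`,
`KL(p‖q) = ∫ φ(f) dq`. On `[0, 1]`, `φ(x) ≤ 1 - x`; on `[1, C]` the convex function `φ`, which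
vanishes at `1`, lies below its chord, `φ(x) ≤ φ(C)/(C - 1) · (x - 1)`. Hence `φ(f) ≤ M_C |f - 1|`,
and `∫ |f - 1| dq ≤ 2 TV(p, q)` by splitting along the set `{f ≥ 1}`. -/

/-- Kullback–Leibler divergence `KL(p‖q) := ∫ (dp/dq) log(dp/dq) dq`. -/
noncomputable def KL {Y : Type*} [MeasurableSpace Y] (p q : Measure Y) : ℝ :=
  ∫ y, (p.rnDeriv q y).toReal * Real.log (p.rnDeriv q y).toReal ∂q

/-- Total variation distance `TV(p, q) := sup_{A measurable} |p(A) - q(A)|`. -/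
noncomputable def TV {Y : Type*} [MeasurableSpace Y] (p q : Measure Y) : ℝ :=
  ⨆ A : {A : Set Y // MeasurableSet A}, |(p A).toReal - (q A).toReal|

/-- `M_C := max 1 ((C log C - C + 1)/(C - 1))` for `C > 1`; for `C = 1` Lean's
convention `x / 0 = 0` gives `MC 1 = max 1 0 = 1 = M_1`, matching the paper. -/
noncomputable def MC (C : ℝ) : ℝ := max 1 ((C * Real.log C - C + 1) / (C - 1))

open InformationTheory

lemma MC_eq_max_klFun_div (C : ℝ) : MC C = max 1 (klFun C / (C - 1)) := by
  rw [MC, klFun_apply]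
  ring_nf

lemma klFun_le_MC_mul_abs_sub_one {C x : ℝ} (hx : 0 ≤ x) (hxC : x ≤ C) :
    klFun x ≤ MC C * |x - 1| := by
  rw [MC_eq_max_klFun_div]
  rcases le_or_gt x 1 with hx1 | hx1
  · have : x * Real.log x ≤ 0 := mul_nonpos_of_nonneg_of_nonpos hx (Real.log_nonpos hx hx1)
    calc klFun x ≤ 1 * |x - 1| := by
          rw [klFun_apply, abs_of_nonpos (by linarith)]; linarith
      _ ≤ _ := by gcongr; exact le_max_left _ _
  · have hslope := convexOn_klFun.secant_mono (a := 1) (Set.mem_Ici.2 zero_le_one)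
      (Set.mem_Ici.2 hx) (Set.mem_Ici.2 (by linarith)) hx1.ne' (by linarith) hxC
    rw [klFun_one, sub_zero, sub_zero, div_le_iff₀ (by linarith)] at hslope
    calc klFun x ≤ klFun C / (C - 1) * (x - 1) := hslope
      _ ≤ _ := by rw [abs_of_pos (by linarith)]; gcongr; exact le_max_right _ _

lemma KL_eq_integral_klFun {Y : Type*} [MeasurableSpace Y] {p q : Measure Y}
    [IsProbabilityMeasure p] [IsProbabilityMeasure q] (hpq : p ≪ q) :
    KL p q = ∫ y, klFun (p.rnDeriv q y).toReal ∂q := by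
  have hint : Integrable (fun y ↦ 1 - (p.rnDeriv q y).toReal) q :=
    (integrable_const 1).sub Measure.integrable_toReal_rnDeriv
  have hkl : (fun y ↦ klFun (p.rnDeriv q y).toReal) =
      fun y ↦ (p.rnDeriv q y).toReal * Real.log (p.rnDeriv q y).toReal
        + (1 - (p.rnDeriv q y).toReal) := by
    ext y; rw [klFun_apply]; ring
  -- Both sides are junk `0` when `f log f` is not integrable, since `1 - f` is.
  by_cases hmul : Integrable
    (fun y ↦ (p.rnDeriv q y).toReal * Real.log (p.rnDeriv q y).toReal) q
  · rw [hkl, integral_add hmul hint, integral_sub (integrable_const 1)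
      Measure.integrable_toReal_rnDeriv, Measure.integral_toReal_rnDeriv hpq]
    simp [KL]
  · rw [KL, integral_undef hmul, hkl, integral_undef]
    rwa [integrable_add_iff_integrable_left' hint]

section TotalVariation

variable {Y : Type*} [MeasurableSpace Y] {p q : Measure Y} [IsFiniteMeasure p] [IsFiniteMeasure q]

lemma abs_sub_le_TV {A : Set Y} (hA : MeasurableSet A) :
    |(p A).toReal - (q A).toReal| ≤ TV p q := by
  refine le_ciSup (f := fun A : {A : Set Y // MeasurableSet A} ↦ |(p A).toReal - (q A).toReal|)
    ⟨p.real Set.univ + q.real Set.univ, ?_⟩ ⟨A, hA⟩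
  rintro _ ⟨B, rfl⟩
  have hp : p.real B ≤ p.real Set.univ := measureReal_mono (Set.subset_univ _)
  have hq : q.real B ≤ q.real Set.univ := measureReal_mono (Set.subset_univ _)
  exact (abs_sub _ _).trans <| add_le_add
    ((abs_of_nonneg ENNReal.toReal_nonneg).trans_le hp)
    ((abs_of_nonneg ENNReal.toReal_nonneg).trans_le hq)

lemma integral_abs_rnDeriv_sub_one_le_two_mul_TV (hpq : p ≪ q) :
    ∫ y, |(p.rnDeriv q y).toReal - 1| ∂q ≤ 2 * TV p q := by
  set f : Y → ℝ := fun y ↦ (p.rnDeriv q y).toReal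
  have hf : Integrable f q := Measure.integrable_toReal_rnDeriv
  set A : Set Y := {y | 1 ≤ f y}
  have hA : MeasurableSet A := (Measure.measurable_rnDeriv p q).ennreal_toReal measurableSet_Ici
  have hset (s : Set Y) : ∫ y in s, f y ∂q = (p s).toReal :=
    Measure.setIntegral_toReal_rnDeriv hpq s
  have hon : ∫ y in A, |f y - 1| ∂q = (p A).toReal - (q A).toReal := by
    rw [setIntegral_congr_fun hA (g := fun y ↦ f y - 1)
        fun y (hy : 1 ≤ f y) ↦ abs_of_nonneg (by linarith),
      integral_sub hf.restrict (integrable_const 1), hset]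
    simp [Measure.real]
  have hoff : ∫ y in Aᶜ, |f y - 1| ∂q = (q Aᶜ).toReal - (p Aᶜ).toReal := by
    rw [setIntegral_congr_fun hA.compl (g := fun y ↦ 1 - f y)
        fun y (hy : ¬ 1 ≤ f y) ↦ by rw [abs_of_neg (by linarith)]; ring,
      integral_sub (integrable_const 1) hf.restrict, hset]
    simp [Measure.real]
  rw [← integral_add_compl hA (f := fun y ↦ |f y - 1|) (hf.sub (integrable_const 1)).abs,
    hon, hoff, two_mul]
  gcongr
  · exact (le_abs_self _).trans (abs_sub_le_TV hA)
  · exact (le_abs_self _).trans (abs_sub_comm (p Aᶜ).toReal _ ▸ abs_sub_le_TV hA.compl)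

end TotalVariation

/-- if `p, q` are probability measures with `p ≪ q` and
`dp/dq ≤ C` q-a.e. for some `C ≥ 1`, then `KL(p‖q) ≤ 2 M_C TV(p, q)`. -/
theorem stmt2 {Y : Type*} [MeasurableSpace Y] (p q : Measure Y)
    [IsProbabilityMeasure p] [IsProbabilityMeasure q] (hpq : p ≪ q)
    (C : ℝ) (hC : 1 ≤ C)
    (hbound : ∀ᵐ y ∂q, p.rnDeriv q y ≤ ENNReal.ofReal C) :
    KL p q ≤ 2 * MC C * TV p q := by
  have hpointwise : ∀ᵐ y ∂q,
      klFun (p.rnDeriv q y).toReal ≤ MC C * |(p.rnDeriv q y).toReal - 1| := by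
    filter_upwards [hbound] with y hy
    exact klFun_le_MC_mul_abs_sub_one ENNReal.toReal_nonneg
      (ENNReal.toReal_le_of_le_ofReal (by linarith) hy)
  have habs : Integrable (fun y ↦ |(p.rnDeriv q y).toReal - 1|) q :=
    (Measure.integrable_toReal_rnDeriv.sub (integrable_const 1)).abs
  have hkl : Integrable (fun y ↦ klFun (p.rnDeriv q y).toReal) q := by
    refine (habs.const_mul (MC C)).mono'
      (measurable_klFun.comp (Measure.measurable_rnDeriv p q).ennreal_toReal).aestronglyMeasurable ?_
    filter_upwards [hpointwise] with y hy
    rwa [Real.norm_of_nonneg (klFun_nonneg ENNReal.toReal_nonneg)]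
  calc KL p q = ∫ y, klFun (p.rnDeriv q y).toReal ∂q := KL_eq_integral_klFun hpq
    _ ≤ MC C * ∫ y, |(p.rnDeriv q y).toReal - 1| ∂q := by
      rw [← integral_const_mul]; exact integral_mono_ae hkl (habs.const_mul _) hpointwise
    _ ≤ MC C * (2 * TV p q) := by
      gcongr
      · exact zero_le_one.trans (le_max_left _ _)
      · exact integral_abs_rnDeriv_sub_one_le_two_mul_TV hpq
    _ = 2 * MC C * TV p q := by ring
end

section
/- Let ν be a σ-finite measure on a measurable space 𝒴, let p_1, …, p_n be probability measures with p_z ≪ ν and densities f_z := dp_z/dν, let w_1, …, w_n > 0 with Σ w_z = 1, and let p̄ := Σ_z w_z·p_z with density f̄ = Σ_z w_z·f_z. Assume the differential entropies H(p̄) and H(p_z), and the divergences KL(p_z ‖ p̄), are all finite for z = 1, …, n. Then H(p̄) = Σ_z w_z·H(p_z) + Σ_z w_z·KL(p_z ‖ p̄); that is, the entropy of a finite mixture decomposes as the weighted average of the component entropies plus the expected Kullback–Leibler divergence of the components from the mixture. -/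
/-!
With `f_z = dp_z/dν` and `f̄ = ∑ w_z f_z`, the chain rule `dp_z/dp̄ · dp̄/dν = f_z` turns
`KL(p_z ‖ p̄)` into the cross entropy `-∫ f_z log f̄ dν` minus `H(p_z)`. Cross entropy is linear
in its first argument, so averaging over `z` with weights `w_z` gives `-∫ f̄ log f̄ dν = H(p̄)`.
-/

open MeasureTheory
open scoped ENNReal NNReal

/-- Differential entropy of `p` with respect to the reference measure `ν`:
`H(p) := -∫ f log f dν` where `f = dp/dν`. -/
noncomputable def Hent {Y : Type*} [MeasurableSpace Y] (ν p : Measure Y) : ℝ :=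
  -∫ y, (p.rnDeriv ν y).toReal * Real.log (p.rnDeriv ν y).toReal ∂ν

namespace MeasureTheory.Measure

variable {α ι : Type*} [MeasurableSpace α] {ν : Measure α}

lemma absolutelyContinuous_finsetSum_smul {s : Finset ι} {μ : ι → Measure α} (w : ι → ℝ≥0)
    (hμ : ∀ i ∈ s, μ i ≪ ν) : ∑ i ∈ s, w i • μ i ≪ ν :=
  Finset.sum_induction _ (· ≪ ν) (fun _ _ h₁ h₂ => h₁.add_left h₂) (.zero ν)
    fun i hi => (hμ i hi).smul_left (w i)

lemma absolutelyContinuous_finsetSum_smul_of_mem {s : Finset ι} (μ : ι → Measure α) {w : ι → ℝ≥0}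
    {i : ι} (hi : i ∈ s) (hw : w i ≠ 0) : μ i ≪ ∑ j ∈ s, w j • μ j :=
  (absolutelyContinuous_smul (by simpa using hw)).trans
    (absolutelyContinuous_of_le (Finset.single_le_sum (f := fun j => w j • μ j)
      (fun _ _ => Measure.zero_le _) hi))

lemma rnDeriv_finsetSum [SigmaFinite ν] (s : Finset ι) (μ : ι → Measure α)
    [∀ i, IsFiniteMeasure (μ i)] :
    (∑ i ∈ s, μ i).rnDeriv ν =ᵐ[ν] ∑ i ∈ s, (μ i).rnDeriv ν := by
  classical
  induction s using Finset.induction_on with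
  | empty => simp [rnDeriv_zero ν]
  | insert i s hi ih =>
    simp only [Finset.sum_insert hi]
    exact (rnDeriv_add' _ _ ν).trans ih.add_left

lemma toReal_rnDeriv_finsetSum_smul [SigmaFinite ν] (s : Finset ι) (μ : ι → Measure α)
    [∀ i, IsFiniteMeasure (μ i)] (w : ι → ℝ≥0) :
    ∀ᵐ y ∂ν, ((∑ i ∈ s, w i • μ i).rnDeriv ν y).toReal
      = ∑ i ∈ s, (w i : ℝ) * ((μ i).rnDeriv ν y).toReal := by
  have h_smul : ∀ᵐ y ∂ν, ∀ i ∈ s, (w i • μ i).rnDeriv ν y = w i * (μ i).rnDeriv ν y :=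
    (Filter.eventually_all_finset s).2 fun i _ => (rnDeriv_smul_left' (μ i) ν (w i)).mono
      fun y hy => by rw [hy, Pi.smul_apply, ENNReal.smul_def, smul_eq_mul]
  have h_fin : ∀ᵐ y ∂ν, ∀ i ∈ s, (μ i).rnDeriv ν y ≠ ∞ :=
    (Filter.eventually_all_finset s).2 fun i _ => (rnDeriv_lt_top (μ i) ν).mono fun _ hy => hy.ne
  filter_upwards [rnDeriv_finsetSum s (fun i => w i • μ i), h_smul, h_fin]
    with y h_sum h_smul h_fin
  rw [h_sum, Finset.sum_apply, ENNReal.toReal_sum fun i hi => ?_]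
  · refine Finset.sum_congr rfl fun i hi => ?_
    rw [h_smul i hi, ENNReal.toReal_mul, ENNReal.coe_toReal]
  · rw [h_smul i hi]; exact ENNReal.mul_ne_top ENNReal.coe_ne_top (h_fin i hi)

end MeasureTheory.Measure

section Entropy

variable {Y : Type*} [MeasurableSpace Y]

noncomputable def crossEntropy (ν p q : Measure Y) : ℝ :=
  -∫ y, (p.rnDeriv ν y).toReal * Real.log (q.rnDeriv ν y).toReal ∂ν

lemma Hent_eq_crossEntropy_self (ν p : Measure Y) : Hent ν p = crossEntropy ν p p := rfl

variable {ν p q : Measure Y} [SigmaFinite ν] [SigmaFinite p] [SigmaFinite q]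

lemma rnDeriv_mul_mul_log_rnDeriv_ae_eq (hpq : p ≪ q) :
    (fun y => (q.rnDeriv ν y).toReal * ((p.rnDeriv q y).toReal * Real.log (p.rnDeriv q y).toReal))
      =ᵐ[ν] fun y => (p.rnDeriv ν y).toReal * Real.log (p.rnDeriv ν y).toReal
        - (p.rnDeriv ν y).toReal * Real.log (q.rnDeriv ν y).toReal := by
  filter_upwards [Measure.rnDeriv_mul_rnDeriv (κ := ν) hpq] with y hy
  rw [← hy, Pi.mul_apply, ENNReal.toReal_mul]
  generalize (p.rnDeriv q y).toReal = a
  generalize (q.rnDeriv ν y).toReal = b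
  rcases eq_or_ne a 0 with rfl | ha
  · simp
  rcases eq_or_ne b 0 with rfl | hb
  · simp
  rw [Real.log_mul ha hb]
  ring

lemma integrable_rnDeriv_mul_log_rnDeriv (hpq : p ≪ q) (hqν : q ≪ ν)
    (hKL : Integrable
      (fun y => (p.rnDeriv q y).toReal * Real.log (p.rnDeriv q y).toReal) q)
    (hH : Integrable
      (fun y => (p.rnDeriv ν y).toReal * Real.log (p.rnDeriv ν y).toReal) ν) :
    Integrable (fun y => (p.rnDeriv ν y).toReal * Real.log (q.rnDeriv ν y).toReal) ν := by
  have hKL_ν := ((integrable_rnDeriv_smul_iff hqν).2 hKL).congr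
    (rnDeriv_mul_mul_log_rnDeriv_ae_eq hpq)
  simpa only [Pi.sub_def, sub_sub_cancel] using hH.sub hKL_ν

lemma KL_eq_crossEntropy_sub_Hent (hpq : p ≪ q) (hqν : q ≪ ν)
    (hKL : Integrable
      (fun y => (p.rnDeriv q y).toReal * Real.log (p.rnDeriv q y).toReal) q)
    (hH : Integrable
      (fun y => (p.rnDeriv ν y).toReal * Real.log (p.rnDeriv ν y).toReal) ν) :
    KL p q = crossEntropy ν p q - Hent ν p := by
  rw [KL, ← integral_rnDeriv_smul hqν]
  simp only [smul_eq_mul]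
  rw [integral_congr_ae (rnDeriv_mul_mul_log_rnDeriv_ae_eq hpq),
    integral_sub hH (integrable_rnDeriv_mul_log_rnDeriv hpq hqν hKL hH), crossEntropy, Hent]
  ring

lemma crossEntropy_finsetSum_smul_left {ι : Type*} (s : Finset ι) (μ : ι → Measure Y)
    [∀ i, IsFiniteMeasure (μ i)] (w : ι → ℝ≥0) (q : Measure Y)
    (hμq : ∀ i ∈ s, Integrable
      (fun y => ((μ i).rnDeriv ν y).toReal * Real.log (q.rnDeriv ν y).toReal) ν) :
    crossEntropy ν (∑ i ∈ s, w i • μ i) q = ∑ i ∈ s, (w i : ℝ) * crossEntropy ν (μ i) q := by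
  simp only [crossEntropy, mul_neg, Finset.sum_neg_distrib, ← integral_const_mul]
  rw [← integral_finsetSum s fun i hi => (hμq i hi).const_mul _]
  refine congrArg _ (integral_congr_ae ?_)
  filter_upwards [Measure.toReal_rnDeriv_finsetSum_smul s μ w] with y hy
  rw [hy, Finset.sum_mul]
  exact Finset.sum_congr rfl fun i _ => mul_assoc _ _ _

end Entropy

theorem stmt10_general {Y : Type*} [MeasurableSpace Y] (ν : Measure Y) [SigmaFinite ν]
    (n : ℕ) (p : Fin n → Measure Y) (hprob : ∀ z, IsProbabilityMeasure (p z))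
    (hac : ∀ z, p z ≪ ν)
    (w : Fin n → NNReal) (hw : ∀ z, 0 < w z)
    (pbar : Measure Y) (hpbar : pbar = ∑ z, w z • p z)
    (hHz : ∀ z, Integrable
      (fun y => ((p z).rnDeriv ν y).toReal * Real.log ((p z).rnDeriv ν y).toReal) ν)
    (hKLz : ∀ z, Integrable
      (fun y => ((p z).rnDeriv pbar y).toReal * Real.log ((p z).rnDeriv pbar y).toReal)
      pbar) :
    Hent ν pbar = ∑ z, (w z : ℝ) * Hent ν (p z) + ∑ z, (w z : ℝ) * KL (p z) pbar := by
  have : IsFiniteMeasure pbar := hpbar ▸ inferInstance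
  have hpbar_ac : pbar ≪ ν := hpbar ▸ Measure.absolutelyContinuous_finsetSum_smul w fun z _ => hac z
  have hp_ac : ∀ z, p z ≪ pbar := fun z =>
    hpbar ▸ Measure.absolutelyContinuous_finsetSum_smul_of_mem p (Finset.mem_univ z) (hw z).ne'
  calc Hent ν pbar
      = crossEntropy ν (∑ z, w z • p z) pbar := by rw [Hent_eq_crossEntropy_self, ← hpbar]
    _ = ∑ z, (w z : ℝ) * crossEntropy ν (p z) pbar :=
      crossEntropy_finsetSum_smul_left _ p w pbar fun z _ =>
        integrable_rnDeriv_mul_log_rnDeriv (hp_ac z) hpbar_ac (hKLz z) (hHz z)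
    _ = _ := by
      simp only [KL_eq_crossEntropy_sub_Hent (hp_ac _) hpbar_ac (hKLz _) (hHz _),
        ← Finset.sum_add_distrib, ← mul_add, add_sub_cancel]

/-- the differential entropy of a finite mixture `p̄ = Σ_z w_z p_z`
of probability measures `p_z ≪ ν` (weights `w_z > 0` summing to 1) decomposes as
`H(p̄) = Σ_z w_z H(p_z) + Σ_z w_z KL(p_z ‖ p̄)`, provided all the entropies and
divergences involved are finite (encoded as integrability of the integrands). -/
theorem stmt10 {Y : Type*} [MeasurableSpace Y] (ν : Measure Y) [SigmaFinite ν]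
    (n : ℕ) (p : Fin n → Measure Y) (hprob : ∀ z, IsProbabilityMeasure (p z))
    (hac : ∀ z, p z ≪ ν)
    (w : Fin n → NNReal) (hw : ∀ z, 0 < w z) (hws : ∑ z, w z = 1)
    (pbar : Measure Y) (hpbar : pbar = ∑ z, w z • p z)
    (hHbar : Integrable
      (fun y => (pbar.rnDeriv ν y).toReal * Real.log (pbar.rnDeriv ν y).toReal) ν)
    (hHz : ∀ z, Integrable
      (fun y => ((p z).rnDeriv ν y).toReal * Real.log ((p z).rnDeriv ν y).toReal) ν)
    (hKLz : ∀ z, Integrable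
      (fun y => ((p z).rnDeriv pbar y).toReal * Real.log ((p z).rnDeriv pbar y).toReal)
      pbar) :
    Hent ν pbar = ∑ z, (w z : ℝ) * Hent ν (p z) + ∑ z, (w z : ℝ) * KL (p z) pbar :=
  stmt10_general ν n p hprob hac w hw pbar hpbar hHz hKLz
end

section
/- Let ν be a σ-finite measure on a measurable space 𝒴 and let p := Σ_{i=1}^K π_i·p_i be a finite mixture of probability measures p_i ≪ ν with densities f_i := dp_i/dν and weights π_i > 0 summing to 1, with mixture density f = Σ_i π_i·f_i. Suppose each overlap integral ∫ f_i·f_j dν is finite and each Σ_j π_j ∫ f_i f_j dν is strictly positive, and that the differential entropy H(p) exists. Then H(p) ≥ −Σ_{i=1}^K π_i·log(Σ_{j=1}^K π_j·∫ f_i·f_j dν). -/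
/-!
Writing `F = Σ_j w_j f_j` for the mixture density, the entropy splits as
`H(p) = -Σ_i w_i ∫ f_i log F dν`. Each `∫ f_i log F dν` is the mean of `log F` under the
probability density `f_i`, so by concavity of `log` (in the form of its tangent line at
`a_i = ∫ f_i F dν`) it is at most `log a_i`, and `a_i = Σ_j w_j ∫ f_i f_j dν`.
-/

open MeasureTheory

lemma Real.log_le_div_sub_one_add_log {x a : ℝ} (hx : 0 < x) (ha : 0 < a) :
    Real.log x ≤ x / a - 1 + Real.log a := by
  have := Real.log_le_sub_one_of_pos (div_pos hx ha)
  rw [Real.log_div hx.ne' ha.ne'] at this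
  linarith

namespace MeasureTheory

variable {α : Type*} [MeasurableSpace α] {μ : Measure α}

theorem integral_mul_log_le_log_integral_mul {g h : α → ℝ} (hg0 : ∀ x, 0 ≤ g x)
    (hpos : ∀ x, 0 < g x → 0 < h x) (hg : Integrable g μ) (hg1 : ∫ x, g x ∂μ = 1)
    (hgh : Integrable (fun x => g x * h x) μ)
    (hglog : Integrable (fun x => g x * Real.log (h x)) μ) (ha : 0 < ∫ x, g x * h x ∂μ) :
    ∫ x, g x * Real.log (h x) ∂μ ≤ Real.log (∫ x, g x * h x ∂μ) := by
  set a := ∫ x, g x * h x ∂μ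
  have htangent : ∀ x, g x * Real.log (h x) ≤ g x * h x / a - g x + g x * Real.log a := by
    intro x
    rcases (hg0 x).eq_or_lt with hgx | hgx
    · simp [← hgx]
    · calc g x * Real.log (h x) ≤ g x * (h x / a - 1 + Real.log a) :=
            mul_le_mul_of_nonneg_left (Real.log_le_div_sub_one_add_log (hpos x hgx) ha) hgx.le
        _ = g x * h x / a - g x + g x * Real.log a := by ring
  have hint : Integrable (fun x => g x * h x / a - g x) μ := (hgh.div_const a).sub hg
  calc ∫ x, g x * Real.log (h x) ∂μ
      ≤ ∫ x, g x * h x / a - g x + g x * Real.log a ∂μ :=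
        integral_mono hglog (hint.add (hg.mul_const _)) htangent
    _ = Real.log a := by
        rw [integral_add hint (hg.mul_const _), integral_sub (hgh.div_const a) hg, integral_div,
          integral_mul_const, hg1, div_self ha.ne']
        ring

theorem Integrable.mul_log_of_le_const_mul {g h : α → ℝ} {c : ℝ} (hg : Measurable g)
    (hh : Measurable h) (hg0 : ∀ x, 0 ≤ g x) (hle : ∀ x, g x ≤ c * h x)
    (hint : Integrable (fun x => h x * Real.log (h x)) μ) :
    Integrable (fun x => g x * Real.log (h x)) μ := by
  refine (hint.const_mul c).mono (hg.mul hh.log).aestronglyMeasurable (.of_forall fun x => ?_)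
  have hch : c * h x ≤ |c| * |h x| := abs_mul c (h x) ▸ le_abs_self _
  simp only [Real.norm_eq_abs, abs_mul, abs_of_nonneg (hg0 x)]
  calc g x * |Real.log (h x)| ≤ (|c| * |h x|) * |Real.log (h x)| :=
        mul_le_mul_of_nonneg_right ((hle x).trans hch) (abs_nonneg _)
    _ = |c| * (|h x| * |Real.log (h x)|) := by ring

theorem integral_mul_finset_sum_const_mul {ι : Type*} (s : Finset ι) (G : α → ℝ) (w : ι → ℝ)
    (f : ι → α → ℝ) (hint : ∀ i ∈ s, Integrable (fun x => G x * f i x) μ) :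
    ∫ x, G x * ∑ i ∈ s, w i * f i x ∂μ = ∑ i ∈ s, w i * ∫ x, G x * f i x ∂μ := by
  simp_rw [Finset.mul_sum, mul_left_comm (G _)]
  rw [integral_finsetSum s fun i hi => (hint i hi).const_mul (w i)]
  simp_rw [integral_const_mul]

theorem integral_mixture_mul_log_le {ι : Type*} [Fintype ι] {w : ι → ℝ} (hw : ∀ i, 0 < w i)
    {f : ι → α → ℝ} (hf0 : ∀ i x, 0 ≤ f i x) (hfm : ∀ i, Measurable (f i))
    (hfint : ∀ i, Integrable (f i) μ) (hf1 : ∀ i, ∫ x, f i x ∂μ = 1)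
    (hoverlap : ∀ i j, Integrable (fun x => f i x * f j x) μ)
    (hpos : ∀ i, 0 < ∑ j, w j * ∫ x, f i x * f j x ∂μ)
    (hent : Integrable (fun x => (∑ i, w i * f i x) * Real.log (∑ i, w i * f i x)) μ) :
    ∫ x, (∑ i, w i * f i x) * Real.log (∑ i, w i * f i x) ∂μ ≤
      ∑ i, w i * Real.log (∑ j, w j * ∫ x, f i x * f j x ∂μ) := by
  set F : α → ℝ := fun x => ∑ i, w i * f i x
  have hle (i : ι) (x : α) : w i * f i x ≤ F x :=
    Finset.single_le_sum (fun j _ => mul_nonneg (hw j).le (hf0 j x)) (Finset.mem_univ i)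
  have hlog (i : ι) : Integrable (fun x => f i x * Real.log (F x)) μ :=
    hent.mul_log_of_le_const_mul (hfm i) (Finset.measurable_sum _ fun j _ => (hfm j).const_mul _)
      (hf0 i) fun x => (le_inv_mul_iff₀ (hw i)).mpr (hle i x)
  have hfF (i : ι) : Integrable (fun x => f i x * F x) μ := by
    simp_rw [F, Finset.mul_sum, mul_left_comm (f i _)]
    exact integrable_finsetSum _ fun j _ => (hoverlap i j).const_mul _
  have hoverlapF (i : ι) : ∫ x, f i x * F x ∂μ = ∑ j, w j * ∫ x, f i x * f j x ∂μ :=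
    integral_mul_finset_sum_const_mul _ _ _ _ fun j _ => hoverlap i j
  have hsplit : ∫ x, F x * Real.log (F x) ∂μ = ∑ i, w i * ∫ x, f i x * Real.log (F x) ∂μ := by
    simp_rw [mul_comm (F _), mul_comm (f _ _)]
    exact integral_mul_finset_sum_const_mul _ _ _ _ fun i _ => by
      simpa only [mul_comm] using hlog i
  rw [hsplit]
  gcongr with i
  · exact (hw i).le
  · rw [← hoverlapF]
    exact integral_mul_log_le_log_integral_mul (hf0 i)
      (fun x hx => (mul_pos (hw i) hx).trans_le (hle i x)) (hfint i) (hf1 i) (hfF i) (hlog i)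
      (hoverlapF i ▸ hpos i)

end MeasureTheory

theorem stmt13_general {Y : Type*} [MeasurableSpace Y] (ν : Measure Y) [SigmaFinite ν]
    (K : ℕ) (p : Fin K → Measure Y) (hprob : ∀ i, IsProbabilityMeasure (p i))
    (hac : ∀ i, p i ≪ ν)
    (w : Fin K → ℝ) (hw : ∀ i, 0 < w i)
    (f : Fin K → Y → ℝ) (hf : ∀ i, f i = fun y => ((p i).rnDeriv ν y).toReal)
    (hoverlap : ∀ i j, Integrable (fun y => f i y * f j y) ν)
    (hpos : ∀ i, 0 < ∑ j, w j * ∫ y, f i y * f j y ∂ν)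
    (hent : Integrable
      (fun y => (∑ i, w i * f i y) * Real.log (∑ i, w i * f i y)) ν) :
    -∫ y, (∑ i, w i * f i y) * Real.log (∑ i, w i * f i y) ∂ν ≥
      -∑ i, w i * Real.log (∑ j, w j * ∫ y, f i y * f j y ∂ν) := by
  have hf0 (i : Fin K) (y : Y) : 0 ≤ f i y := hf i ▸ ENNReal.toReal_nonneg
  have hfm (i : Fin K) : Measurable (f i) := by
    rw [hf i]; exact (p i).measurable_rnDeriv ν |>.ennreal_toReal
  have hfint (i : Fin K) : Integrable (f i) ν := hf i ▸ Measure.integrable_toReal_rnDeriv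
  have hf1 (i : Fin K) : ∫ y, f i y ∂ν = 1 := by
    simp [hf i, Measure.integral_toReal_rnDeriv (hac i)]
  exact neg_le_neg <| integral_mixture_mul_log_le hw hf0 hfm hfint hf1 hoverlap hpos hent

/-- general mixture entropy lower bound: let `p = Σ_i w_i p_i` be a
finite mixture of probability measures `p_i ≪ ν` with densities `f_i = dp_i/dν` and
positive weights summing to 1, with mixture density `F = Σ_i w_i f_i`. If each overlap
integral `∫ f_i f_j dν` is finite, each `Σ_j w_j ∫ f_i f_j dν` is strictly positive,
and the differential entropy `H(p) = -∫ F log F dν` exists (the integrand is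
integrable), then `H(p) ≥ -Σ_i w_i log(Σ_j w_j ∫ f_i f_j dν)`. -/
theorem stmt13 {Y : Type*} [MeasurableSpace Y] (ν : Measure Y) [SigmaFinite ν]
    (K : ℕ) (p : Fin K → Measure Y) (hprob : ∀ i, IsProbabilityMeasure (p i))
    (hac : ∀ i, p i ≪ ν)
    (w : Fin K → ℝ) (hw : ∀ i, 0 < w i) (hws : ∑ i, w i = 1)
    (f : Fin K → Y → ℝ) (hf : ∀ i, f i = fun y => ((p i).rnDeriv ν y).toReal)
    (hoverlap : ∀ i j, Integrable (fun y => f i y * f j y) ν)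
    (hpos : ∀ i, 0 < ∑ j, w j * ∫ y, f i y * f j y ∂ν)
    (hent : Integrable
      (fun y => (∑ i, w i * f i y) * Real.log (∑ i, w i * f i y)) ν) :
    -∫ y, (∑ i, w i * f i y) * Real.log (∑ i, w i * f i y) ∂ν ≥
      -∑ i, w i * Real.log (∑ j, w j * ∫ y, f i y * f j y ∂ν) :=
  stmt13_general ν K p hprob hac w hw f hf hoverlap hpos hent
end

section
/- Let p(y) = Σ_{i=1}^K π_i·N(y; μ_i, C_i) be a Gaussian mixture density on ℝ^N with weights π_i > 0 summing to 1, means μ_i ∈ ℝ^N, and symmetric positive definite covariance matrices C_i ∈ ℝ^{N×N}. Then the differential entropy of p with respect to Lebesgue measure on ℝ^N satisfies H(p) ≥ −Σ_{i=1}^K π_i·log(Σ_{j=1}^K π_j·N(μ_i; μ_j, C_i + C_j)), where N(μ_i; μ_j, C_i + C_j) is the multivariate normal density with mean μ_j and covariance C_i + C_j evaluated at μ_i. -/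
open MeasureTheory

/-- Density at `y ∈ ℝ^N` of the multivariate normal distribution with mean `μ` and
(symmetric positive definite) covariance `C`:
`N(y; μ, C) = (2π)^{-N/2} (det C)^{-1/2} exp(-(1/2)(y-μ)ᵀ C⁻¹ (y-μ))`. -/
noncomputable def gaussPdf {N : ℕ} (μ : Fin N → ℝ) (C : Matrix (Fin N) (Fin N) ℝ)
    (y : Fin N → ℝ) : ℝ :=
  (2 * Real.pi) ^ (-(N : ℝ) / 2) * C.det ^ (-(1 : ℝ) / 2) *
    Real.exp (-(1 / 2) * dotProduct (y - μ) (C⁻¹.mulVec (y - μ)))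

/-- Differential entropy of a probability density `f` on `ℝ^N` with respect to
Lebesgue measure: `H(f) := -∫ f log f dy`. -/
noncomputable def Hd {N : ℕ} (f : (Fin N → ℝ) → ℝ) : ℝ :=
  -∫ y, f y * Real.log (f y)

/-!
Write `p = ∑ i, w i * g i` with `g i = N(·; μ i, C i)`. Then `∫ p log p = ∑ i, w i ∫ g i log p`,
and since `log` is concave and `g i` is a probability density, `∫ g i log p ≤ log ∫ g i p`.
For Gaussian components `∫ g i p = ∑ j, w j ∫ g i g j` is explicit: completing the square, the
product of two Gaussian densities is `N(μ i; μ j, C i + C j)` times a Gaussian density in `y`.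
Integrability of `g i log p` comes from `w i g i ≤ p ≤ sup p` and `-log t ≤ 2 / √t`.
-/

open Matrix Real

section MixtureEntropy

variable {α : Type*} [MeasurableSpace α] {ν : Measure α}

lemma neg_log_le_two_div_sqrt {t : ℝ} (ht : 0 < t) : -log t ≤ 2 / √t := by
  have h := log_le_rpow_div (inv_pos.mpr ht).le (by norm_num : (0 : ℝ) < 1 / 2)
  rwa [log_inv, ← sqrt_eq_rpow, sqrt_inv, div_div_eq_mul_div, div_one, inv_mul_eq_div] at h

lemma integrable_mul_log_of_le {g p : α → ℝ} {c M : ℝ} (hc : 0 < c) (hg : ∀ x, 0 < g x)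
    (hgp : ∀ x, c * g x ≤ p x) (hpM : ∀ x, p x ≤ M) (hgi : Integrable g ν)
    (hgs : Integrable (fun x => √(g x)) ν) (hpm : AEStronglyMeasurable p ν) :
    Integrable (fun x => g x * log (p x)) ν := by
  refine ((hgi.const_mul |log M|).add (hgs.const_mul (2 / √c))).mono'
    (hgi.1.mul (measurable_log.comp_aemeasurable hpm.aemeasurable).aestronglyMeasurable)
    (.of_forall fun x => ?_)
  have hcg : 0 < c * g x := mul_pos hc (hg x)
  have hp : 0 < p x := hcg.trans_le (hgp x)
  have hlog : |log (p x)| ≤ |log M| + 2 / √(c * g x) := by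
    rw [abs_le]
    constructor
    · linarith [neg_log_le_two_div_sqrt hcg, log_le_log hcg (hgp x), abs_nonneg (log M)]
    · linarith [log_le_log hp (hpM x), le_abs_self (log M),
        div_nonneg zero_le_two (sqrt_nonneg (c * g x))]
  have hsqrt : g x * (2 / √(c * g x)) = 2 / √c * √(g x) := by
    rw [sqrt_mul hc.le]
    field_simp
    exact div_sqrt
  calc ‖g x * log (p x)‖ = g x * |log (p x)| := by
        rw [norm_mul, norm_of_nonneg (hg x).le, norm_eq_abs]
    _ ≤ g x * (|log M| + 2 / √(c * g x)) := mul_le_mul_of_nonneg_left hlog (hg x).le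
    _ = |log M| * g x + 2 / √c * √(g x) := by rw [mul_add, hsqrt, mul_comm]

lemma integral_mul_log_le_log_integral_mul {g p : α → ℝ} (hg : 0 ≤ g) (hg1 : ∫ x, g x ∂ν = 1)
    (hp : ∀ x, 0 < p x) (hgp : Integrable (fun x => g x * p x) ν)
    (hglog : Integrable (fun x => g x * log (p x)) ν) :
    ∫ x, g x * log (p x) ∂ν ≤ log (∫ x, g x * p x ∂ν) := by
  have hgi : Integrable g ν := .of_integral_ne_zero (by simp [hg1])
  set a := ∫ x, g x * p x ∂ν
  have ha : 0 < a := by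
    have hsupp : Function.support (fun x => g x * p x) = Function.support g := by
      rw [Function.support_mul, Function.support_eq_univ fun x => (hp x).ne', Set.inter_univ]
    rw [integral_pos_iff_support_of_nonneg (fun x => mul_nonneg (hg x) (hp x).le) hgp, hsupp,
      ← integral_pos_iff_support_of_nonneg hg hgi, hg1]
    exact one_pos
  -- `log` lies below its tangent line at `a`
  have htangent : ∀ x, g x * log (p x) ≤ a⁻¹ * (g x * p x) + (log a - 1) * g x := fun x => by
    have h := log_le_sub_one_of_pos (div_pos (hp x) ha)
    rw [log_div (hp x).ne' ha.ne'] at h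
    have := mul_le_mul_of_nonneg_left h (hg x)
    rw [div_eq_inv_mul] at this
    linarith
  calc ∫ x, g x * log (p x) ∂ν ≤ ∫ x, a⁻¹ * (g x * p x) + (log a - 1) * g x ∂ν :=
        integral_mono hglog ((hgp.const_mul _).add (hgi.const_mul _)) htangent
    _ = log a := by
        rw [integral_add (hgp.const_mul _) (hgi.const_mul _), integral_const_mul,
          integral_const_mul, hg1, inv_mul_cancel₀ ha.ne']
        ring

theorem integral_mixture_mul_log_le {ι : Type*} [Fintype ι] {w : ι → ℝ} {g : ι → α → ℝ}
    {M : ι → ℝ} (hw : ∀ i, 0 < w i) (hg : ∀ i x, 0 < g i x) (hgM : ∀ i x, g i x ≤ M i)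
    (hg1 : ∀ i, ∫ x, g i x ∂ν = 1) (hgs : ∀ i, Integrable (fun x => √(g i x)) ν) :
    ∫ x, (∑ i, w i * g i x) * log (∑ i, w i * g i x) ∂ν ≤
      ∑ i, w i * log (∫ x, g i x * ∑ j, w j * g j x ∂ν) := by
  rcases isEmpty_or_nonempty ι with hι | hι
  · simp
  set p := fun x => ∑ i, w i * g i x
  have hgi : ∀ i, Integrable (g i) ν := fun i => .of_integral_ne_zero (by simp [hg1])
  have hp : ∀ x, 0 < p x := fun x =>
    Finset.sum_pos (fun i _ => mul_pos (hw i) (hg i x)) Finset.univ_nonempty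
  have hpM : ∀ x, p x ≤ ∑ i, w i * M i := fun x =>
    Finset.sum_le_sum fun i _ => mul_le_mul_of_nonneg_left (hgM i x) (hw i).le
  have hpm : AEStronglyMeasurable p ν :=
    (integrable_finsetSum _ fun i _ => (hgi i).const_mul (w i)).aestronglyMeasurable
  have hglog : ∀ i, Integrable (fun x => g i x * log (p x)) ν := fun i =>
    integrable_mul_log_of_le (hw i) (hg i)
      (fun x => Finset.single_le_sum (fun j _ => (mul_pos (hw j) (hg j x)).le)
        (Finset.mem_univ i)) hpM (hgi i) (hgs i) hpm
  have hgp : ∀ i, Integrable (fun x => g i x * p x) ν := fun i =>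
    (hgi i).mul_bdd hpm (c := ∑ i, w i * M i) (.of_forall fun x => by
      rw [norm_of_nonneg (hp x).le]; exact hpM x)
  calc ∫ x, p x * log (p x) ∂ν = ∑ i, w i * ∫ x, g i x * log (p x) ∂ν := by
        show ∫ x, (∑ i, w i * g i x) * log (p x) ∂ν = _
        simp_rw [Finset.sum_mul, mul_assoc]
        rw [integral_finsetSum _ fun i _ => (hglog i).const_mul (w i)]
        simp_rw [integral_const_mul]
    _ ≤ ∑ i, w i * log (∫ x, g i x * p x ∂ν) := by
        gcongr with i
        · exact (hw i).le
        · exact integral_mul_log_le_log_integral_mul (fun x => (hg i x).le) (hg1 i) hp (hgp i)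
            (hglog i)

end MixtureEntropy

namespace Matrix

variable {n α : Type*} [Fintype n] [CommRing α]

lemma IsSymm.dotProduct_mulVec_comm {A : Matrix n n α} (hA : A.IsSymm) (x y : n → α) :
    x ⬝ᵥ A *ᵥ y = y ⬝ᵥ A *ᵥ x := by
  rw [dotProduct_mulVec, ← mulVec_transpose, hA.eq, dotProduct_comm]

variable [DecidableEq n]

lemma IsSymm.dotProduct_mulVec_add_two_mul_dotProduct {R : Matrix n n α} (hR : R.IsSymm)
    (hdet : IsUnit R.det) (u b : n → α) :
    u ⬝ᵥ R *ᵥ u + 2 * (u ⬝ᵥ b) =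
      (u + R⁻¹ *ᵥ b) ⬝ᵥ R *ᵥ (u + R⁻¹ *ᵥ b) - b ⬝ᵥ R⁻¹ *ᵥ b := by
  have hRR : R *ᵥ (R⁻¹ *ᵥ b) = b := by rw [mulVec_mulVec, mul_nonsing_inv _ hdet, one_mulVec]
  rw [mulVec_add, hRR, add_dotProduct, dotProduct_add, dotProduct_add,
    hR.dotProduct_mulVec_comm (R⁻¹ *ᵥ b) u, hRR, dotProduct_comm (R⁻¹ *ᵥ b) b]
  ring

lemma dotProduct_mulVec_add_dotProduct_mulVec_add {P Q : Matrix n n α} (hP : P.IsSymm)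
    (hQ : Q.IsSymm) (hPQ : IsUnit (P + Q).det) (u d : n → α) :
    u ⬝ᵥ P *ᵥ u + (u + d) ⬝ᵥ Q *ᵥ (u + d) =
      (u + (P + Q)⁻¹ *ᵥ (Q *ᵥ d)) ⬝ᵥ (P + Q) *ᵥ (u + (P + Q)⁻¹ *ᵥ (Q *ᵥ d)) +
        d ⬝ᵥ (Q - Q * (P + Q)⁻¹ * Q) *ᵥ d := by
  have hsq := (hP.add hQ).dotProduct_mulVec_add_two_mul_dotProduct hPQ u (Q *ᵥ d)
  have hcross : (Q *ᵥ d) ⬝ᵥ (P + Q)⁻¹ *ᵥ (Q *ᵥ d) = d ⬝ᵥ (Q * (P + Q)⁻¹ * Q) *ᵥ d := by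
    rw [dotProduct_comm, hQ.dotProduct_mulVec_comm, mulVec_mulVec, mulVec_mulVec]
  have hexpand : u ⬝ᵥ P *ᵥ u + (u + d) ⬝ᵥ Q *ᵥ (u + d) =
      u ⬝ᵥ (P + Q) *ᵥ u + 2 * (u ⬝ᵥ Q *ᵥ d) + d ⬝ᵥ Q *ᵥ d := by
    rw [mulVec_add, dotProduct_add, add_dotProduct, add_dotProduct,
      hQ.dotProduct_mulVec_comm d u, add_mulVec, dotProduct_add]
    ring
  rw [hexpand, hsq, hcross, sub_mulVec, dotProduct_sub]
  ring

lemma add_eq_mul_inv_add_inv_mul {A B : Matrix n n α} (hA : IsUnit A.det) (hB : IsUnit B.det) :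
    A + B = A * (A⁻¹ + B⁻¹) * B := by
  rw [mul_add, mul_nonsing_inv _ hA, add_mul, one_mul, mul_assoc, nonsing_inv_mul _ hB, mul_one,
    add_comm]

open scoped MatrixOrder in
lemma PosDef.exists_eq_conjTranspose_mul_self {A : Matrix n n ℝ} (hA : A.PosDef) :
    ∃ B : Matrix n n ℝ, B.det ≠ 0 ∧ A = Bᴴ * B := by
  obtain ⟨B, rfl⟩ := CStarAlgebra.nonneg_iff_eq_star_mul_self.mp hA.posSemidef.nonneg
  exact ⟨B, fun h => hA.det_pos.ne' (by rw [star_eq_conjTranspose, det_mul, h, mul_zero]), rfl⟩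

omit [DecidableEq n] in
lemma dotProduct_conjTranspose_mul_self_mulVec [StarRing α] [TrivialStar α] (B : Matrix n n α)
    (x : n → α) :
    x ⬝ᵥ (Bᴴ * B) *ᵥ x = (B *ᵥ x) ⬝ᵥ (B *ᵥ x) := by
  rw [← mulVec_mulVec, dotProduct_mulVec, conjTranspose_eq_transpose_of_trivial, vecMul_transpose]

end Matrix

section GaussianIntegral

variable {ι : Type*} [Fintype ι]

lemma integrable_exp_neg_half_dotProduct_self :
    Integrable fun z : ι → ℝ => exp (-(1 / 2) * z ⬝ᵥ z) := by
  simp only [dotProduct, Finset.mul_sum, exp_sum, ← sq]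
  exact Integrable.fintype_prod fun _ => integrable_exp_neg_mul_sq (by norm_num : (0 : ℝ) < 1 / 2)

lemma integral_exp_neg_half_dotProduct_self :
    ∫ z : ι → ℝ, exp (-(1 / 2) * z ⬝ᵥ z) = (2 * π) ^ ((Fintype.card ι : ℝ) / 2) := by
  simp only [dotProduct, Finset.mul_sum, exp_sum, ← sq]
  rw [volume_pi, integral_fintype_prod_eq_pow (fun x : ℝ => exp (-(1 / 2) * x ^ 2)),
    integral_gaussian, div_div_eq_mul_div, div_one, sqrt_eq_rpow, ← rpow_natCast,
    ← rpow_mul (by positivity)]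
  ring_nf

variable [DecidableEq ι]

lemma measurableEmbedding_mulVec {B : Matrix ι ι ℝ} (hB : IsUnit B.det) :
    MeasurableEmbedding (B *ᵥ · : (ι → ℝ) → ι → ℝ) :=
  (toLinearEquiv' B (invertibleOfIsUnitDet B hB)).toContinuousLinearEquiv.toHomeomorph
    |>.measurableEmbedding

lemma map_mulVec_volume {B : Matrix ι ι ℝ} (hB : B.det ≠ 0) :
    Measure.map (B *ᵥ ·) (volume : Measure (ι → ℝ)) = ENNReal.ofReal |B.det|⁻¹ • volume := by
  have h := Real.map_linearMap_volume_pi_eq_smul_volume_pi (f := toLin' B)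
    (by rwa [LinearMap.det_toLin'])
  rwa [LinearMap.det_toLin', abs_inv, toLin'_apply', coe_mulVecLin] at h

lemma integral_comp_mulVec {B : Matrix ι ι ℝ} (hB : B.det ≠ 0) (f : (ι → ℝ) → ℝ) :
    ∫ x, f (B *ᵥ x) = |B.det|⁻¹ * ∫ y, f y := by
  rw [← (measurableEmbedding_mulVec hB.isUnit).integral_map, map_mulVec_volume hB,
    integral_smul_measure, ENNReal.toReal_ofReal (by positivity), smul_eq_mul]

lemma integrable_comp_mulVec_iff {B : Matrix ι ι ℝ} (hB : B.det ≠ 0) {f : (ι → ℝ) → ℝ} :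
    Integrable (fun x => f (B *ᵥ x)) ↔ Integrable f := by
  rw [← Function.comp_def, ← (measurableEmbedding_mulVec hB.isUnit).integrable_map_iff,
    map_mulVec_volume hB, integrable_smul_measure (by simpa using hB) ENNReal.ofReal_ne_top]

lemma integrable_exp_neg_half_quadForm {A : Matrix ι ι ℝ} (hA : A.PosDef) :
    Integrable fun x : ι → ℝ => exp (-(1 / 2) * x ⬝ᵥ A *ᵥ x) := by
  obtain ⟨B, hB, rfl⟩ := hA.exists_eq_conjTranspose_mul_self
  simp_rw [dotProduct_conjTranspose_mul_self_mulVec]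
  exact (integrable_comp_mulVec_iff hB (f := fun z => exp (-(1 / 2) * z ⬝ᵥ z))).mpr
    integrable_exp_neg_half_dotProduct_self

lemma integral_exp_neg_half_quadForm {A : Matrix ι ι ℝ} (hA : A.PosDef) :
    ∫ x, exp (-(1 / 2) * x ⬝ᵥ A *ᵥ x) = (2 * π) ^ ((Fintype.card ι : ℝ) / 2) / √A.det := by
  obtain ⟨B, hB, rfl⟩ := hA.exists_eq_conjTranspose_mul_self
  simp_rw [dotProduct_conjTranspose_mul_self_mulVec]
  rw [integral_comp_mulVec hB (fun z => exp (-(1 / 2) * z ⬝ᵥ z)),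
    integral_exp_neg_half_dotProduct_self, det_mul, det_conjTranspose, star_trivial,
    sqrt_mul_self_eq_abs, inv_mul_eq_div]

end GaussianIntegral

section GaussPdf

variable {N : ℕ} {μ : Fin N → ℝ} {C : Matrix (Fin N) (Fin N) ℝ}

lemma gaussPdf_pos (hC : C.PosDef) (y : Fin N → ℝ) : 0 < gaussPdf μ C y := by
  have := hC.det_pos
  unfold gaussPdf
  positivity

lemma gaussPdf_le (hC : C.PosDef) (y : Fin N → ℝ) :
    gaussPdf μ C y ≤ (2 * π) ^ (-(N : ℝ) / 2) * C.det ^ (-(1 : ℝ) / 2) := by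
  have := hC.det_pos
  refine mul_le_of_le_one_right (by positivity) (exp_le_one_iff.mpr ?_)
  have := hC.inv.posSemidef.dotProduct_mulVec_nonneg (y - μ)
  rw [star_trivial] at this
  linarith

lemma integrable_gaussPdf (hC : C.PosDef) : Integrable (gaussPdf μ C) :=
  ((integrable_exp_neg_half_quadForm hC.inv).comp_sub_right μ).const_mul _

lemma integral_gaussPdf (hC : C.PosDef) : ∫ y, gaussPdf μ C y = 1 := by
  have hdet := hC.det_pos
  unfold gaussPdf
  rw [integral_const_mul, integral_sub_right_eq_self (fun x => exp (-(1 / 2) * x ⬝ᵥ C⁻¹ *ᵥ x)),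
    integral_exp_neg_half_quadForm hC.inv, Fintype.card_fin, det_nonsing_inv, Ring.inverse_eq_inv',
    sqrt_inv, neg_div, neg_div, rpow_neg (by positivity), rpow_neg hdet.le, ← sqrt_eq_rpow,
    sqrt_eq_rpow]
  field_simp

lemma sqrt_gaussPdf (hC : C.PosDef) (y : Fin N → ℝ) :
    √(gaussPdf μ C y) = √((2 * π) ^ (-(N : ℝ) / 2) * C.det ^ (-(1 : ℝ) / 2)) *
      exp (-(1 / 2) * (y - μ) ⬝ᵥ ((1 / 2 : ℝ) • C⁻¹) *ᵥ (y - μ)) := by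
  have := hC.det_pos
  unfold gaussPdf
  rw [sqrt_mul (by positivity), ← exp_half, smul_mulVec, dotProduct_smul, smul_eq_mul]
  ring_nf

lemma integrable_sqrt_gaussPdf (hC : C.PosDef) : Integrable fun y => √(gaussPdf μ C y) := by
  simp_rw [sqrt_gaussPdf hC]
  exact ((integrable_exp_neg_half_quadForm (hC.inv.smul (by norm_num))).comp_sub_right μ).const_mul
    _

lemma gaussPdf_mul_gaussPdf {μ₁ μ₂ : Fin N → ℝ} {C₁ C₂ : Matrix (Fin N) (Fin N) ℝ}
    (h₁ : C₁.PosDef) (h₂ : C₂.PosDef) (y : Fin N → ℝ) :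
    gaussPdf μ₁ C₁ y * gaussPdf μ₂ C₂ y = gaussPdf μ₂ (C₁ + C₂) μ₁ *
      gaussPdf (μ₁ - (C₁⁻¹ + C₂⁻¹)⁻¹ *ᵥ (C₂⁻¹ *ᵥ (μ₁ - μ₂))) (C₁⁻¹ + C₂⁻¹)⁻¹ y := by
  set R := C₁⁻¹ + C₂⁻¹ with hR_def
  have hR : R.PosDef := h₁.inv.add h₂.inv
  have hRu : IsUnit R.det := hR.det_pos.ne'.isUnit
  have hsymm {A : Matrix (Fin N) (Fin N) ℝ} (hA : A.PosDef) : A.IsSymm :=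
    isHermitian_iff_isSymm.mp hA.1
  have hquad : (y - μ₁) ⬝ᵥ C₁⁻¹ *ᵥ (y - μ₁) + (y - μ₂) ⬝ᵥ C₂⁻¹ *ᵥ (y - μ₂) =
      (y - (μ₁ - R⁻¹ *ᵥ (C₂⁻¹ *ᵥ (μ₁ - μ₂)))) ⬝ᵥ R⁻¹⁻¹ *ᵥ
          (y - (μ₁ - R⁻¹ *ᵥ (C₂⁻¹ *ᵥ (μ₁ - μ₂)))) +
        (μ₁ - μ₂) ⬝ᵥ (C₁ + C₂)⁻¹ *ᵥ (μ₁ - μ₂) := by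
    have hwoodbury : (C₁ + C₂)⁻¹ = C₂⁻¹ - C₂⁻¹ * R⁻¹ * C₂⁻¹ := by
      simpa [add_comm C₂] using add_mul_mul_inv_eq_sub C₂ 1 C₁ 1 h₂.isUnit h₁.isUnit
        (by simpa [add_comm] using hR.isUnit)
    rw [nonsing_inv_nonsing_inv R hRu, hwoodbury, sub_sub_eq_add_sub,
      show y - μ₂ = (y - μ₁) + (μ₁ - μ₂) by abel, add_sub_right_comm]
    exact dotProduct_mulVec_add_dotProduct_mulVec_add (hsymm h₁.inv) (hsymm h₂.inv) hRu _ _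
  have hdet : C₁.det ^ (-(1 : ℝ) / 2) * C₂.det ^ (-(1 : ℝ) / 2) =
      (C₁ + C₂).det ^ (-(1 : ℝ) / 2) * R⁻¹.det ^ (-(1 : ℝ) / 2) := by
    rw [← mul_rpow h₁.det_pos.le h₂.det_pos.le,
      ← mul_rpow (h₁.add h₂).det_pos.le hR.inv.det_pos.le,
      add_eq_mul_inv_add_inv_mul h₁.det_pos.ne'.isUnit h₂.det_pos.ne'.isUnit, det_mul, det_mul,
      det_nonsing_inv, Ring.inverse_eq_inv', ← hR_def]
    field_simp [hR.det_pos.ne']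
  have hsplit (c₁ c₂ c₃ c₄ t₁ t₂ t₃ t₄ : ℝ) (hc : c₁ * c₂ = c₃ * c₄) (ht : t₁ + t₂ = t₃ + t₄) :
      c₁ * exp t₁ * (c₂ * exp t₂) = c₃ * exp t₃ * (c₄ * exp t₄) := by
    rw [mul_mul_mul_comm, ← exp_add, ht, hc, exp_add, mul_mul_mul_comm]
  refine hsplit _ _ _ _ _ _ _ _ ?_ ?_
  · rw [mul_mul_mul_comm, hdet, mul_mul_mul_comm]
  · linear_combination (-(1 : ℝ) / 2) * hquad

lemma integrable_gaussPdf_mul_gaussPdf {μ₁ μ₂ : Fin N → ℝ} {C₁ C₂ : Matrix (Fin N) (Fin N) ℝ}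
    (h₁ : C₁.PosDef) (h₂ : C₂.PosDef) :
    Integrable fun y => gaussPdf μ₁ C₁ y * gaussPdf μ₂ C₂ y := by
  simp_rw [gaussPdf_mul_gaussPdf h₁ h₂]
  exact (integrable_gaussPdf (h₁.inv.add h₂.inv).inv).const_mul _

lemma integral_gaussPdf_mul_gaussPdf {μ₁ μ₂ : Fin N → ℝ} {C₁ C₂ : Matrix (Fin N) (Fin N) ℝ}
    (h₁ : C₁.PosDef) (h₂ : C₂.PosDef) :
    ∫ y, gaussPdf μ₁ C₁ y * gaussPdf μ₂ C₂ y = gaussPdf μ₂ (C₁ + C₂) μ₁ := by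
  simp_rw [gaussPdf_mul_gaussPdf h₁ h₂]
  rw [integral_const_mul, integral_gaussPdf (h₁.inv.add h₂.inv).inv, mul_one]

lemma integral_gaussPdf_mul_sum {ι : Type*} [Fintype ι] (w : ι → ℝ) (ν : ι → Fin N → ℝ)
    {D : ι → Matrix (Fin N) (Fin N) ℝ} (hC : C.PosDef) (hD : ∀ j, (D j).PosDef) :
    ∫ y, gaussPdf μ C y * ∑ j, w j * gaussPdf (ν j) (D j) y =
      ∑ j, w j * gaussPdf (ν j) (C + D j) μ := by
  simp_rw [Finset.mul_sum, mul_left_comm (gaussPdf μ C _)]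
  rw [integral_finsetSum _ fun j _ => (integrable_gaussPdf_mul_gaussPdf hC (hD j)).const_mul _]
  simp_rw [integral_const_mul, integral_gaussPdf_mul_gaussPdf hC (hD _)]

end GaussPdf

theorem stmt14_general (N K : ℕ) (w : Fin K → ℝ) (hw : ∀ i, 0 < w i)
    (μ : Fin K → Fin N → ℝ) (C : Fin K → Matrix (Fin N) (Fin N) ℝ)
    (hC : ∀ i, (C i).PosDef) :
    Hd (fun y => ∑ i, w i * gaussPdf (μ i) (C i) y) ≥
      -∑ i, w i * Real.log (∑ j, w j * gaussPdf (μ j) (C i + C j) (μ i)) := by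
  rw [Hd, ge_iff_le, neg_le_neg_iff]
  refine (integral_mixture_mul_log_le hw (fun i => gaussPdf_pos (hC i))
    (fun i => gaussPdf_le (hC i)) (fun i => integral_gaussPdf (hC i))
    (fun i => integrable_sqrt_gaussPdf (hC i))).trans_eq ?_
  simp_rw [integral_gaussPdf_mul_sum w μ (hC _) hC]

/-- Gaussian-mixture entropy lower bound, Huber et al.:
for a Gaussian mixture `p(y) = Σ_i w_i N(y; μ_i, C_i)` with positive weights summing
to 1 and symmetric positive definite covariances,
`H(p) ≥ -Σ_i w_i log(Σ_j w_j N(μ_i; μ_j, C_i + C_j))`. -/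
theorem stmt14 (N K : ℕ) (w : Fin K → ℝ) (hw : ∀ i, 0 < w i) (hws : ∑ i, w i = 1)
    (μ : Fin K → Fin N → ℝ) (C : Fin K → Matrix (Fin N) (Fin N) ℝ)
    (hC : ∀ i, (C i).PosDef) :
    Hd (fun y => ∑ i, w i * gaussPdf (μ i) (C i) y) ≥
      -∑ i, w i * Real.log (∑ j, w j * gaussPdf (μ j) (C i + C j) (μ i)) :=
  stmt14_general N K w hw μ C hC
end
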